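/- arXiv:2006.14101 — 2 statements merged into one kernel-verified Lean document; each statement's English description precedes it below -/
import Mathlib

section
/- Let 1 < p < ∞ and q with 1/p + 1/q = 1. Let u₁, …, u_m ∈ ℓ_q(ℕ) be linearly independent and let y ∈ ℝ^m with y ≠ 0. Then the minimum norm interpolation problem inf{‖x‖_p : x ∈ ℓ_p(ℕ), ⟨u_j, x⟩ = y_j for all j} has a unique solution x̂ = (x̂_i)_{i∈ℕ}, and there exist c₁, …, c_m ∈ ℝ such that, with u := Σ_{j=1}^m c_j u_j (necessarily u ≠ 0), x̂_i = u_i |u_i|^{q−2} / ‖u‖_q^{q−2} for every i ∈ ℕ, with the convention that the i-th term is 0 when u_i = 0. -/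
/-!
The dual problem, minimising `‖∑ c_j u_j‖_q^q / q - ∑ c_j y_j` over `c`, is continuous and
coercive on the finite-dimensional span of the `u_j`, so it has a minimiser `W = ∑ c_j u_j`;
differentiating `‖W + t u_j‖_q^q` termwise at `t = 0` shows that `x̂ := W |W|^(q-2)` satisfies
the interpolation conditions. For every interpolant `x` the pairing `∑ W_i x_i` is
`∑ c_j y_j = ‖W‖_q^q = ‖x̂‖_p^p`, and Young's inequality `x_i W_i ≤ |x_i|^p/p + |W_i|^q/q` summed
over `i` gives `‖x̂‖_p ≤ ‖x‖_p`. If `‖x‖_p = ‖x̂‖_p`, equality holds in every term, which forces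
`x_i = W_i |W_i|^(q-2)`. Rescaling `c` by `‖W‖^(q-2)` puts `x̂` in the normalised form.
-/

open Real Filter

/-- `a |a|^(q-2) = sign a · |a|^(q-1)`, the derivative of `|a|^q / q`. -/
noncomputable def dualityMap (q a : ℝ) : ℝ := a * |a| ^ (q - 2)

section dualityMap

variable {p q : ℝ}

@[simp] lemma dualityMap_zero (q : ℝ) : dualityMap q 0 = 0 := zero_mul _

lemma abs_dualityMap (hq : 1 < q) (a : ℝ) : |dualityMap q a| = |a| ^ (q - 1) := by
  rcases eq_or_ne a 0 with rfl | ha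
  · simp [zero_rpow (by linarith : q - 1 ≠ 0)]
  · rw [dualityMap, abs_mul, abs_rpow_of_nonneg (abs_nonneg a), abs_abs,
      show q - 1 = (q - 2) + 1 by ring, rpow_add_one (abs_pos.2 ha).ne', mul_comm]

lemma dualityMap_mul_self (hq : 1 < q) (a : ℝ) : dualityMap q a * a = |a| ^ q := by
  rcases eq_or_ne a 0 with rfl | ha
  · simp [zero_rpow (by linarith : q ≠ 0)]
  · have h := (abs_pos.2 ha).ne'
    conv_rhs => rw [show q = (q - 2) + 1 + 1 by ring, rpow_add_one h, rpow_add_one h]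
    rw [dualityMap, mul_assoc (|a| ^ (q - 2)), abs_mul_abs_self]
    ring

lemma abs_dualityMap_rpow (hpq : p.HolderConjugate q) (a : ℝ) :
    |dualityMap q a| ^ p = |a| ^ q := by
  rw [abs_dualityMap hpq.symm.lt, ← rpow_mul (abs_nonneg a), hpq.symm.sub_one_mul_conj]

lemma dualityMap_mul {c : ℝ} (hc : 0 ≤ c) (a : ℝ) :
    dualityMap q (c * a) = c ^ (q - 2) * (c * dualityMap q a) := by
  rw [dualityMap, dualityMap, abs_mul, abs_of_nonneg hc, mul_rpow hc (abs_nonneg a)]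
  ring

lemma eq_dualityMap_of_mul_eq_young (hpq : p.HolderConjugate q) {a b : ℝ}
    (h : a * b = |a| ^ p / p + |b| ^ q / q) : a = dualityMap q b := by
  have hyoung := young_inequality_of_nonneg (abs_nonneg a) (abs_nonneg b) hpq
  have habs : |a| * |b| = |a| ^ p / p + |b| ^ q / q :=
    le_antisymm hyoung (h ▸ abs_mul a b ▸ le_abs_self _)
  have hpow : |a| ^ p = |b| ^ q :=
    (young_inequality_eq_iff_of_nonneg (abs_nonneg a) (abs_nonneg b) hpq).1 habs
  have hnorm : |a| = |dualityMap q b| := by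
    rw [abs_dualityMap hpq.symm.lt, ← hpq.symm.div_conj_eq_sub_one, div_eq_mul_inv,
      rpow_mul (abs_nonneg b), ← hpow, ← rpow_mul (abs_nonneg a), mul_inv_cancel₀ hpq.ne_zero,
      rpow_one]
  -- `a` and `dualityMap q b` have the same modulus and both pair nonnegatively with `b`.
  rcases eq_or_ne b 0 with rfl | hb
  · simpa using hnorm
  · have hJ : dualityMap q b * b = |dualityMap q b| * |b| := by
      rw [dualityMap_mul_self hpq.symm.lt, abs_dualityMap hpq.symm.lt, ← rpow_add_one
        (abs_pos.2 hb).ne', sub_add_cancel]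
    exact mul_right_cancel₀ hb (by rw [h, ← habs, hJ, hnorm])

lemma dualityMap_eq_div_rpow {N : ℝ} (hN : 0 < N) (a : ℝ) :
    dualityMap q a = dualityMap q (N ^ (q - 2) * a) / (N ^ (q - 2) * N) ^ (q - 2) := by
  have hscale_pos : 0 < N ^ (q - 2) := by positivity
  rw [dualityMap_mul hscale_pos.le, mul_rpow hscale_pos.le hN.le]
  field_simp

end dualityMap

lemma Real.HolderConjugate.div_add_div_eq_self {p q : ℝ} (hpq : p.HolderConjugate q) (a : ℝ) :
    a / p + a / q = a := by
  rw [div_eq_mul_inv, div_eq_mul_inv, ← mul_add, hpq.inv_add_inv_eq_one, mul_one]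

lemma tendsto_rpow_div_sub_mul_atTop {q : ℝ} (hq : 1 < q) (C : ℝ) :
    Tendsto (fun r : ℝ => r ^ q / q - C * r) atTop atTop := by
  have h : Tendsto (fun r : ℝ => r ^ (q - 1) / q - C) atTop atTop :=
    tendsto_atTop_add_const_right _ _
      ((tendsto_rpow_atTop (by linarith)).atTop_div_const (by linarith))
  refine (tendsto_id.atTop_mul_atTop₀ h).congr' ?_
  filter_upwards [eventually_gt_atTop 0] with r hr
  rw [id, show r ^ q = r ^ (q - 1) * r by rw [← rpow_add_one hr.ne', sub_add_cancel]]
  ring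

namespace lp

variable {ι : Type*} {p q : ℝ}

lemma norm_rpow_eq_tsum_abs (hq : 0 < q) (f : lp (fun _ : ι => ℝ) (.ofReal q)) :
    ‖f‖ ^ q = ∑' i, |f i| ^ q := by
  simpa [ENNReal.toReal_ofReal hq.le] using
    lp.norm_rpow_eq_tsum (by rwa [ENNReal.toReal_ofReal hq.le]) f

lemma summable_abs_rpow (hq : 0 < q) (f : lp (fun _ : ι => ℝ) (.ofReal q)) :
    Summable fun i => |f i| ^ q := by
  simpa [ENNReal.toReal_ofReal hq.le] using
    (lp.memℓp f).summable (by rwa [ENNReal.toReal_ofReal hq.le])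

lemma memℓp_dualityMap (hpq : p.HolderConjugate q) (W : lp (fun _ : ι => ℝ) (.ofReal q)) :
    Memℓp (fun i => dualityMap q (W i)) (.ofReal p) :=
  memℓp_gen <| by
    simpa [ENNReal.toReal_ofReal hpq.nonneg, abs_dualityMap_rpow hpq] using
      summable_abs_rpow hpq.symm.pos W

/-- The norming functional of `W ∈ ℓ^q`, scaled by `‖W‖^(q-1)`. -/
noncomputable def dualElement (hpq : p.HolderConjugate q) (W : lp (fun _ : ι => ℝ) (.ofReal q)) :
    lp (fun _ : ι => ℝ) (.ofReal p) :=
  ⟨_, memℓp_dualityMap hpq W⟩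

section Young

variable (hpq : p.HolderConjugate q) (W : lp (fun _ : ι => ℝ) (.ofReal q))
  (x : lp (fun _ : ι => ℝ) (.ofReal p))
include hpq

@[simp] lemma dualElement_apply (i : ι) : dualElement hpq W i = dualityMap q (W i) := rfl

lemma norm_dualElement_rpow : ‖dualElement hpq W‖ ^ p = ‖W‖ ^ q := by
  simp [norm_rpow_eq_tsum_abs hpq.pos, norm_rpow_eq_tsum_abs hpq.symm.pos, abs_dualityMap_rpow hpq]

lemma tsum_mul_dualElement : ∑' i, W i * dualElement hpq W i = ‖W‖ ^ q := by
  simp [norm_rpow_eq_tsum_abs hpq.symm.pos, mul_comm (W _), dualityMap_mul_self hpq.symm.lt]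

lemma hasSum_young :
    HasSum (fun i => |x i| ^ p / p + |W i| ^ q / q) (‖x‖ ^ p / p + ‖W‖ ^ q / q) := by
  rw [norm_rpow_eq_tsum_abs hpq.pos, norm_rpow_eq_tsum_abs hpq.symm.pos, ← tsum_div_const,
    ← tsum_div_const]
  exact ((summable_abs_rpow hpq.pos x).div_const p).hasSum.add
    ((summable_abs_rpow hpq.symm.pos W).div_const q).hasSum

lemma summable_mul_apply : Summable fun i => W i * x i :=
  (hasSum_young hpq W x).summable.of_norm_bounded fun i => by
    rw [norm_mul, mul_comm, Real.norm_eq_abs, Real.norm_eq_abs]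
    exact young_inequality_of_nonneg (abs_nonneg _) (abs_nonneg _) hpq

lemma tsum_mul_le_young : ∑' i, W i * x i ≤ ‖x‖ ^ p / p + ‖W‖ ^ q / q :=
  hasSum_le (fun i => mul_comm (W i) (x i) ▸ young_inequality (x i) (W i) hpq)
    (summable_mul_apply hpq W x).hasSum (hasSum_young hpq W x)

lemma eq_dualElement_of_tsum_mul_eq_young
    (h : ∑' i, W i * x i = ‖x‖ ^ p / p + ‖W‖ ^ q / q) : x = dualElement hpq W := by
  have hgap : HasSum (fun i => |x i| ^ p / p + |W i| ^ q / q - W i * x i) 0 := by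
    simpa [h] using (hasSum_young hpq W x).sub (summable_mul_apply hpq W x).hasSum
  have hgap_nonneg : ∀ i, 0 ≤ |x i| ^ p / p + |W i| ^ q / q - W i * x i := fun i =>
    sub_nonneg.2 (mul_comm (W i) (x i) ▸ young_inequality (x i) (W i) hpq)
  rw [hasSum_zero_iff_of_nonneg hgap_nonneg] at hgap
  ext i
  have hgap_i := congrFun hgap i
  simp only [Pi.zero_apply] at hgap_i
  exact eq_dualityMap_of_mul_eq_young hpq (by linarith [mul_comm (W i) (x i)])

variable {W x}

lemma norm_rpow_le_of_tsum_mul_eq (h : ∑' i, W i * x i = ‖W‖ ^ q) :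
    ‖W‖ ^ q ≤ ‖x‖ ^ p := by
  have hsplit := hpq.div_add_div_eq_self (‖W‖ ^ q)
  have := tsum_mul_le_young hpq W x
  exact (div_le_div_iff_of_pos_right hpq.pos).1 (by linarith)

lemma norm_dualElement_le (h : ∑' i, W i * x i = ∑' i, W i * dualElement hpq W i) :
    ‖dualElement hpq W‖ ≤ ‖x‖ := by
  rw [tsum_mul_dualElement] at h
  rw [← rpow_le_rpow_iff (norm_nonneg' _) (norm_nonneg' _) hpq.pos, norm_dualElement_rpow]
  exact norm_rpow_le_of_tsum_mul_eq hpq h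

lemma eq_dualElement_of_norm_le (h : ∑' i, W i * x i = ∑' i, W i * dualElement hpq W i)
    (hx : ‖x‖ ≤ ‖dualElement hpq W‖) : x = dualElement hpq W := by
  rw [tsum_mul_dualElement] at h
  have hxp : ‖x‖ ^ p = ‖W‖ ^ q := le_antisymm
    (norm_dualElement_rpow hpq W ▸ rpow_le_rpow (norm_nonneg' _) hx hpq.nonneg)
    (norm_rpow_le_of_tsum_mul_eq hpq h)
  refine eq_dualElement_of_tsum_mul_eq_young hpq W x ?_
  rw [h, hxp, hpq.div_add_div_eq_self]

end Young

theorem hasDerivAt_norm_add_smul_rpow (hq : 1 < q) (W v : lp (fun _ : ι => ℝ) (.ofReal q)) :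
    HasDerivAt (fun t : ℝ => ‖W + t • v‖ ^ q) (q * ∑' i, dualityMap q (W i) * v i) 0 := by
  have hq0 : 0 < q := by linarith
  have hterm (i : ι) (t : ℝ) : HasDerivAt (fun t => |W i + t * v i| ^ q)
      (q * dualityMap q (W i + t * v i) * v i) t :=
    ((hasDerivAt_abs_rpow _ hq).comp t ((hasDerivAt_mul_const (v i)).const_add (W i))).congr_deriv
      (by rw [dualityMap]; ring)
  -- termwise differentiation, dominated on `|t| < 1` by the summable `q (|W i| + |v i|)^q`
  have hbound (i : ι) (t : ℝ) (ht : t ∈ Metric.ball (0 : ℝ) 1) :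
      ‖q * dualityMap q (W i + t * v i) * v i‖ ≤ q * (|W i| + |v i|) ^ q := by
    have ht' : |t| ≤ 1 := by simpa using (Metric.mem_ball.1 ht).le
    have hs : |W i + t * v i| ≤ |W i| + |v i| :=
      (abs_add_le _ _).trans (by rw [abs_mul]; gcongr; nlinarith [abs_nonneg (v i)])
    rw [Real.norm_eq_abs, abs_mul, abs_mul, abs_of_pos hq0, abs_dualityMap hq, mul_assoc]
    calc q * (|W i + t * v i| ^ (q - 1) * |v i|)
        ≤ q * ((|W i| + |v i|) ^ (q - 1) * (|W i| + |v i|)) := by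
          gcongr
          linarith [abs_nonneg (W i)]
      _ = q * (|W i| + |v i|) ^ q := by
          rw [← rpow_add_one' (by positivity) (by linarith), sub_add_cancel]
  have hsum : Summable fun i => q * (|W i| + |v i|) ^ q :=
    (summable_Lp_add_of_nonneg hq.le (fun i => abs_nonneg (W i)) (fun i => abs_nonneg (v i))
      (summable_abs_rpow hq0 W) (summable_abs_rpow hq0 v)).mul_left q
  have hW : Summable fun i => |W i + 0 * v i| ^ q := by simpa using summable_abs_rpow hq0 W
  have hderiv := hasDerivAt_tsum_of_isPreconnected hsum Metric.isOpen_ball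
    (convex_ball (0 : ℝ) 1).isPreconnected (fun i t _ => hterm i t) hbound
    (Metric.mem_ball_self one_pos) hW (Metric.mem_ball_self one_pos)
  simp only [zero_mul, add_zero, mul_assoc, tsum_mul_left] at hderiv
  have hexpand : (fun t : ℝ => ‖W + t • v‖ ^ q) = fun t => ∑' i, |W i + t * v i| ^ q := by
    funext t
    rw [norm_rpow_eq_tsum_abs hq0]
    rfl
  rw [hexpand]
  exact hderiv

/-- `w` is a minimiser of `w ↦ ‖w‖^q / q - φ w` on `S`, which exists because this function is
continuous and coercive on the finite-dimensional space `S`; the identity is its first-order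
condition. -/
theorem exists_forall_tsum_dualityMap_mul_eq (hq : 1 < q)
    (S : Submodule ℝ (lp (fun _ : ι => ℝ) (.ofReal q))) [FiniteDimensional ℝ S]
    (φ : S →ₗ[ℝ] ℝ) :
    ∃ w : S, ∀ v : S, ∑' i, dualityMap q ((w : ι → ℝ) i) * (v : ι → ℝ) i = φ v := by
  have : Fact (1 ≤ ENNReal.ofReal q) := ⟨ENNReal.one_le_ofReal.2 hq.le⟩
  let F : S → ℝ := fun w => ‖w‖ ^ q / q - φ w
  let φL := LinearMap.toContinuousLinearMap φ
  have hF : Continuous F :=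
    ((continuous_norm.rpow_const fun _ => Or.inr (by linarith)).div_const q).sub φL.continuous
  have hFcoercive : Tendsto F (cocompact S) atTop := by
    refine tendsto_atTop_mono (fun w => ?_)
      ((tendsto_rpow_div_sub_mul_atTop hq ‖φL‖).comp tendsto_norm_cocompact_atTop)
    have : φ w ≤ ‖φL‖ * ‖w‖ := (le_abs_self _).trans (φL.le_opNorm w)
    simp only [Function.comp_apply, F]
    linarith
  obtain ⟨w, hw⟩ := hF.exists_forall_le hFcoercive
  refine ⟨w, fun v => ?_⟩
  have hline : (fun t : ℝ => F (w + t • v))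
      = fun t => ‖w.1 + t • v.1‖ ^ q / q - (φ w + t * φ v) := by
    funext t
    simp only [F, map_add, map_smul, smul_eq_mul]
    rfl
  have hderiv : HasDerivAt (fun t : ℝ => F (w + t • v))
      (q * (∑' i, dualityMap q ((w : ι → ℝ) i) * (v : ι → ℝ) i) / q - 1 * φ v) 0 := by
    rw [hline]
    exact ((hasDerivAt_norm_add_smul_rpow hq w.1 v.1).div_const q).sub
      (((hasDerivAt_id 0).mul_const (φ v)).const_add (φ w))
  have hmin : IsLocalMin (fun t : ℝ => F (w + t • v)) 0 :=
    Eventually.of_forall fun t => by simpa using hw (w + t • v)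
  have hzero := hmin.hasDerivAt_eq_zero hderiv
  rw [mul_div_cancel_left₀ _ (by linarith : q ≠ 0)] at hzero
  linarith

lemma tsum_sum_smul_apply_mul {κ : Type*} [Fintype κ] (hpq : p.HolderConjugate q)
    (c : κ → ℝ) (u : κ → lp (fun _ : ι => ℝ) (.ofReal q))
    (x : lp (fun _ : ι => ℝ) (.ofReal p)) :
    ∑' i, (∑ j, c j • u j) i * x i = ∑ j, c j * ∑' i, u j i * x i := by
  simp only [coeFn_sum, coeFn_smul, Finset.sum_apply, Pi.smul_apply, smul_eq_mul,
    Finset.sum_mul, mul_assoc, ← tsum_mul_left]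
  exact Summable.tsum_finsetSum fun j _ => (summable_mul_apply hpq (u j) x).mul_left (c j)

end lp

/-- Explicit solution of minimum norm interpolation in `ℓ_p(ℕ)`,
`1 < p < ∞`: the problem has a unique solution `x̂` and there are coefficients `c_j`
such that, with `u := Σ c_j u_j`, `x̂_i = u_i |u_i|^{q-2} / ‖u‖_q^{q-2}`. -/
theorem minimum_norm_interpolation_lp
    (p q : ℝ) (hp : 1 < p) (hpq : 1 / p + 1 / q = 1)
    {m : ℕ} (u : Fin m → lp (fun _ : ℕ => ℝ) (ENNReal.ofReal q))
    (hu : LinearIndependent ℝ u) (y : Fin m → ℝ) (hy : y ≠ 0) :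
    ∃ xhat : lp (fun _ : ℕ => ℝ) (ENNReal.ofReal p),
      ((∀ j, ∑' i, u j i * xhat i = y j) ∧
        ∀ x : lp (fun _ : ℕ => ℝ) (ENNReal.ofReal p),
          (∀ j, ∑' i, u j i * x i = y j) → ‖xhat‖ ≤ ‖x‖) ∧
      (∀ x : lp (fun _ : ℕ => ℝ) (ENNReal.ofReal p),
        ((∀ j, ∑' i, u j i * x i = y j) ∧
          ∀ x' : lp (fun _ : ℕ => ℝ) (ENNReal.ofReal p),
            (∀ j, ∑' i, u j i * x' i = y j) → ‖x‖ ≤ ‖x'‖) → x = xhat) ∧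
      ∃ c : Fin m → ℝ, ∀ i : ℕ,
        xhat i = (∑ j, c j • u j) i * |(∑ j, c j • u j) i| ^ (q - 2) /
          ‖∑ j, c j • u j‖ ^ (q - 2) := by
  have hpq' : p.HolderConjugate q :=
    Real.holderConjugate_iff.2 ⟨hp, by simpa [one_div] using hpq⟩
  have : Fact (1 ≤ ENNReal.ofReal q) := ⟨ENNReal.one_le_ofReal.2 hpq'.symm.lt.le⟩
  have := FiniteDimensional.span_of_finite ℝ (Set.finite_range u)
  obtain ⟨⟨W, hWspan⟩, hW⟩ := lp.exists_forall_tsum_dualityMap_mul_eq hpq'.symm.lt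
    (Submodule.span ℝ (Set.range u)) ((Module.Basis.span hu).constr ℝ y)
  have hWu (j : Fin m) : ∑' i, u j i * dualityMap q (W i) = y j := by
    have h := hW (Module.Basis.span hu j)
    rw [Module.Basis.constr_basis, Module.Basis.span_apply] at h
    simpa only [mul_comm] using h
  obtain ⟨c, rfl⟩ := (Submodule.mem_span_range_iff_exists_fun ℝ).1 hWspan
  set xhat := lp.dualElement hpq' (∑ j, c j • u j)
  have hfeas : ∀ j, ∑' i, u j i * xhat i = y j := hWu
  have hpair (x : lp (fun _ : ℕ => ℝ) (ENNReal.ofReal p)) (hx : ∀ j, ∑' i, u j i * x i = y j) :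
      ∑' i, (∑ j, c j • u j) i * x i = ∑' i, (∑ j, c j • u j) i * xhat i := by
    simp only [lp.tsum_sum_smul_apply_mul hpq', hx, hfeas]
  refine ⟨xhat, ⟨hfeas, fun x hx => lp.norm_dualElement_le hpq' (hpair x hx)⟩,
    fun x ⟨hx, hmin⟩ => lp.eq_dualElement_of_norm_le hpq' (hpair x hx) (hmin xhat hfeas), ?_⟩
  set W := ∑ j, c j • u j
  have hWpos : 0 < ‖W‖ :=
    norm_pos_iff.2 fun h => hy (funext fun j => by simpa [h] using (hWu j).symm)
  refine ⟨fun j => ‖W‖ ^ (q - 2) * c j, fun i => ?_⟩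
  have hscale : ∑ j, (‖W‖ ^ (q - 2) * c j) • u j = ‖W‖ ^ (q - 2) • W := by
    simp only [W, Finset.smul_sum, mul_smul]
  rw [hscale, norm_smul, Real.norm_of_nonneg (by positivity)]
  exact dualityMap_eq_div_rpow hWpos (W i)
end

section
/- Let u₁, …, u_m ∈ c₀ be linearly independent and let y ∈ ℝ^m. Define L : ℓ₁(ℕ) → ℝ^m by L(x) := (⟨u_j, x⟩)_{j=1}^m. Then x̂ ∈ ℓ₁(ℕ) is a solution of the minimum norm interpolation problem inf{‖x‖₁ : x ∈ ℓ₁(ℕ), L(x) = y} if and only if there exists c ∈ ℝ^m such that L(x̂) = y and x̂ = P(x̂ − S(Σ_{j=1}^m c_j u_j)), where P is the componentwise soft-threshold operator P(z)_i := sign(z_i) · max(|z_i| − 1, 0) and S : c₀ → c₀ is the truncation operator given by S(u)_i := u_i if |u_i| = ‖u‖_∞ and S(u)_i := 0 otherwise. (The first equation is the fixed-point equation c = prox_{ι_y*}(c + L(x̂)) since the proximity operator of the conjugate ι_y* of the indicator function of {y} is the translation a ↦ a − y.) -/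
/-!
Both sides say that `v = ∑ j, c j • u j` is, up to sign, a subgradient of `‖·‖₁` at `x̂`:
`|v i| ≤ 1` and `v i * x̂ i = |x̂ i|` for all `i`. For the minimality side this is Hahn–Banach:
`x̂` has least norm on `x̂ + ⋂ ker ⟨u_j, ·⟩` iff some functional dominated by the norm, vanishing on
that intersection (hence in the span of the `⟨u_j, ·⟩`), takes the value `‖x̂‖` at `x̂`; in `ℓ₁`
this is the subgradient condition. For the fixed-point side, `x = P(x + s)` iff `s` is a subgradient
of `|·|` at `x`, and when `x̂ ≠ 0` the subgradient condition forces `‖v‖_∞ = 1`, so the truncation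
`S` changes nothing where it matters.
-/

open Filter Topology

open scoped lp ENNReal

theorem exists_mem_span_le_norm_of_isMinOn {ι E : Type*} [Finite ι] [SeminormedAddCommGroup E]
    [NormedSpace ℝ E] (f : ι → E →ₗ[ℝ] ℝ) {x₀ : E}
    (hmin : IsMinOn (‖·‖) {x | ∀ j, f j x = f j x₀} x₀) :
    ∃ g ∈ Submodule.span ℝ (Set.range f), (∀ x, g x ≤ ‖x‖) ∧ g x₀ = ‖x₀‖ := by
  set K := ⨅ j, LinearMap.ker (f j)
  have hK : ∀ {k}, k ∈ K ↔ ∀ j, f j k = 0 := by simp [K, Submodule.mem_iInf]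
  by_cases hx₀ : x₀ ∈ K
  · have h0 : ‖x₀‖ = 0 :=
      le_antisymm (by simpa using hmin (a := 0) (by simpa using fun j => (hK.1 hx₀ j).symm))
        (norm_nonneg _)
    exact ⟨0, zero_mem _, fun x => by simp, by simp [h0]⟩
  -- the functional `k + t • x₀ ↦ t * ‖x₀‖` is dominated by the norm by minimality of `x₀`
  let φ := (⟨K, 0⟩ : E →ₗ.[ℝ] ℝ).supSpanSingleton x₀ ‖x₀‖ hx₀
  have hφ : ∀ z : φ.domain, φ z ≤ ‖(z : E)‖ := by
    rintro ⟨z, hz⟩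
    obtain ⟨k, hk, w, hw, rfl⟩ := Submodule.mem_sup.1 hz
    obtain ⟨t, rfl⟩ := Submodule.mem_span_singleton.1 hw
    rw [LinearPMap.supSpanSingleton_apply_mk _ _ _ _ _ hk]
    simp only [LinearPMap.mk_apply, LinearMap.zero_apply, RingHom.id_apply, smul_eq_mul, zero_add]
    rcases le_or_gt t 0 with ht | ht
    · exact (mul_nonpos_of_nonpos_of_nonneg ht (norm_nonneg _)).trans (norm_nonneg _)
    · have : ‖x₀‖ ≤ ‖t⁻¹ • k + x₀‖ := hmin (by simp [(hK.1 hk)])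
      calc t * ‖x₀‖ ≤ t * ‖t⁻¹ • k + x₀‖ := by gcongr
        _ = ‖t • (t⁻¹ • k + x₀)‖ := (norm_smul_of_nonneg ht.le _).symm
        _ = ‖k + t • x₀‖ := by rw [smul_add, smul_inv_smul₀ ht.ne']
  obtain ⟨g, hgφ, hg⟩ := exists_extension_of_le_sublinear φ (‖·‖)
    (fun c hc x => norm_smul_of_nonneg hc.le x) norm_add_le hφ
  refine ⟨g, mem_span_of_iInf_ker_le_ker fun k hk => ?_, hg, ?_⟩
  · have := hgφ ⟨k, Submodule.mem_sup_left hk⟩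
    rw [LinearPMap.supSpanSingleton_apply_mk_of_mem _ _ _ hk] at this
    simpa using this
  · rw [hgφ ⟨x₀, Submodule.mem_sup_right (Submodule.mem_span_singleton_self _)⟩,
      LinearPMap.supSpanSingleton_apply_self]

theorem isMinOn_norm_iff_exists_mem_span {ι E : Type*} [Finite ι] [SeminormedAddCommGroup E]
    [NormedSpace ℝ E] (f : ι → E →ₗ[ℝ] ℝ) (x₀ : E) :
    IsMinOn (‖·‖) {x | ∀ j, f j x = f j x₀} x₀ ↔
      ∃ g ∈ Submodule.span ℝ (Set.range f), (∀ x, g x ≤ ‖x‖) ∧ g x₀ = ‖x₀‖ := by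
  refine ⟨exists_mem_span_le_norm_of_isMinOn f, ?_⟩
  rintro ⟨g, hg, hle, hx₀⟩ x hx
  have : g x = g x₀ := by
    have : g ∈ LinearMap.ker (LinearMap.applyₗ (R := ℝ) (M₂ := ℝ) (x - x₀)) :=
      Submodule.span_le.2 (Set.range_subset_iff.2 fun j => by simp [hx j]) hg
    simpa [sub_eq_zero] using this
  calc ‖x₀‖ = g x := by rw [this, hx₀]
    _ ≤ ‖x‖ := hle x

theorem mul_le_abs_of_abs_le_one {a b : ℝ} (ha : |a| ≤ 1) : a * b ≤ |b| :=
  calc a * b ≤ |a| * |b| := by rw [← abs_mul]; exact le_abs_self _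
    _ ≤ |b| := mul_le_of_le_one_left (abs_nonneg _) ha

section L1

variable {ι : Type*}

theorem memℓp_one_iff_summable_abs {x : ι → ℝ} : Memℓp x 1 ↔ Summable fun i => |x i| := by
  simp [memℓp_gen_iff (by simp : 0 < (1 : ℝ≥0∞).toReal)]

theorem lp.norm_one_eq_tsum_abs (x : ℓ¹(ι, ℝ)) : ‖x‖ = ∑' i, |x i| := by
  simp [lp.norm_eq_tsum_rpow (by simp : 0 < (1 : ℝ≥0∞).toReal)]

theorem lp.summable_abs_one (x : ℓ¹(ι, ℝ)) : Summable fun i => |x i| :=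
  memℓp_one_iff_summable_abs.1 (lp.memℓp x)

theorem forall_lp_one_iff {P : (ι → ℝ) → Prop} :
    (∀ x : ℓ¹(ι, ℝ), P x) ↔ ∀ x : ι → ℝ, (Summable fun i => |x i|) → P x :=
  ⟨fun h x hx => h ⟨x, memℓp_one_iff_summable_abs.2 hx⟩, fun h x => h x (lp.summable_abs_one x)⟩

theorem lp.summable_mul_infty_one (v : ℓ^∞(ι, ℝ)) (x : ℓ¹(ι, ℝ)) :
    Summable fun i => v i * x i :=
  .of_norm_bounded ((lp.summable_abs_one x).mul_left ‖v‖) fun i => by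
    rw [norm_mul, Real.norm_eq_abs (x i)]
    gcongr
    exact lp.norm_apply_le_norm ENNReal.top_ne_zero v i

noncomputable def l1Pairing : ℓ^∞(ι, ℝ) →ₗ[ℝ] ℓ¹(ι, ℝ) →ₗ[ℝ] ℝ :=
  LinearMap.mk₂ ℝ (fun v x => ∑' i, v i * x i)
    (fun v w x => by
      simp only [lp.coeFn_add, Pi.add_apply, add_mul]
      exact (lp.summable_mul_infty_one v x).tsum_add (lp.summable_mul_infty_one w x))
    (fun c v x => by
      simp only [lp.coeFn_smul, Pi.smul_apply, smul_eq_mul, mul_assoc, tsum_mul_left])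
    (fun v x z => by
      simp only [lp.coeFn_add, Pi.add_apply, mul_add]
      exact (lp.summable_mul_infty_one v x).tsum_add (lp.summable_mul_infty_one v z))
    (fun c v x => by
      simp only [lp.coeFn_smul, Pi.smul_apply, smul_eq_mul, mul_left_comm, tsum_mul_left])

theorem l1Pairing_apply (v : ℓ^∞(ι, ℝ)) (x : ℓ¹(ι, ℝ)) : l1Pairing v x = ∑' i, v i * x i := rfl

theorem l1Pairing_single [DecidableEq ι] (v : ℓ^∞(ι, ℝ)) (i : ι) (a : ℝ) :
    l1Pairing v (lp.single 1 i a) = v i * a := by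
  rw [l1Pairing_apply, tsum_eq_single i fun j hj => by simp [lp.single_apply, hj]]
  simp [lp.single_apply]

theorem l1Pairing_le_norm_iff (v : ℓ^∞(ι, ℝ)) :
    (∀ x, l1Pairing v x ≤ ‖x‖) ↔ ∀ i, |v i| ≤ 1 := by
  classical
  refine ⟨fun h i => abs_le.2 ⟨?_, ?_⟩, fun h x => ?_⟩
  · exact neg_le.1 (by simpa [l1Pairing_single, lp.norm_single] using h (lp.single 1 i (-1)))
  · simpa [l1Pairing_single, lp.norm_single] using h (lp.single 1 i 1)
  · rw [l1Pairing_apply, lp.norm_one_eq_tsum_abs]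
    exact (lp.summable_mul_infty_one v x).tsum_le_tsum (fun i => mul_le_abs_of_abs_le_one (h i))
      (lp.summable_abs_one x)

theorem l1Pairing_eq_norm_iff {v : ℓ^∞(ι, ℝ)} (hv : ∀ i, |v i| ≤ 1) (x : ℓ¹(ι, ℝ)) :
    l1Pairing v x = ‖x‖ ↔ ∀ i, v i * x i = |x i| := by
  rw [l1Pairing_apply, lp.norm_one_eq_tsum_abs]
  refine ⟨fun h => ?_, fun h => tsum_congr h⟩
  have hgap : HasSum (fun i => |x i| - v i * x i) 0 := by
    simpa [h] using (lp.summable_abs_one x).hasSum.sub (lp.summable_mul_infty_one v x).hasSum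
  have hnonneg : ∀ i, 0 ≤ |x i| - v i * x i := fun i =>
    sub_nonneg.2 (mul_le_abs_of_abs_le_one (hv i))
  intro i
  have := congrFun ((hasSum_zero_iff_of_nonneg hnonneg).1 hgap) i
  simp only [Pi.zero_apply, sub_eq_zero] at this
  exact this.symm

def IsL1Subgradient (v x : ι → ℝ) : Prop := ∀ i, |v i| ≤ 1 ∧ v i * x i = |x i|

theorem isL1Subgradient_iff_l1Pairing (v : ℓ^∞(ι, ℝ)) (x : ℓ¹(ι, ℝ)) :
    IsL1Subgradient v x ↔ (∀ z, l1Pairing v z ≤ ‖z‖) ∧ l1Pairing v x = ‖x‖ := by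
  rw [l1Pairing_le_norm_iff, IsL1Subgradient, forall_and]
  exact and_congr_right fun hv => (l1Pairing_eq_norm_iff hv x).symm

end L1

section Truncation

variable {ι : Type*}

/-- The soft-threshold operator `P` of the statement, i.e. the proximity operator of `|·|`. -/
noncomputable def softThreshold (z : ℝ) : ℝ := Real.sign z * max (|z| - 1) 0

theorem softThreshold_neg (z : ℝ) : softThreshold (-z) = -softThreshold z := by
  simp [softThreshold, Real.sign_neg]

theorem eq_softThreshold_add_iff_of_pos {x : ℝ} (hx : 0 < x) (s : ℝ) :
    x = softThreshold (x + s) ↔ s = 1 := by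
  unfold softThreshold
  rcases lt_trichotomy (x + s) 0 with h | h | h
  · rw [Real.sign_of_neg h]; grind
  · rw [h]; grind
  · rw [Real.sign_of_pos h]; grind

theorem eq_softThreshold_add_iff (x s : ℝ) :
    x = softThreshold (x + s) ↔ |s| ≤ 1 ∧ s * x = |x| := by
  rcases lt_trichotomy x 0 with hx | rfl | hx
  · rw [← neg_inj, ← softThreshold_neg, neg_add, eq_softThreshold_add_iff_of_pos (neg_pos.2 hx),
      abs_of_neg hx, neg_eq_iff_eq_neg]
    constructor
    · rintro rfl; simp
    · rintro ⟨-, h⟩; exact mul_right_cancel₀ hx.ne (by linarith : s * x = -1 * x)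
  · rw [zero_add, softThreshold, eq_comm, mul_eq_zero, Real.sign_eq_zero_iff, max_eq_right_iff,
      sub_nonpos]
    simp only [mul_zero, abs_zero, and_true, or_iff_right_iff_imp]
    rintro rfl; simp
  · rw [eq_softThreshold_add_iff_of_pos hx, abs_of_pos hx]
    constructor
    · rintro rfl; simp
    · rintro ⟨-, h⟩; exact mul_right_cancel₀ hx.ne' (by linarith : s * x = 1 * x)

/-- The truncation operator `S` of the statement. -/
noncomputable def peakTruncation (v : ι → ℝ) (i : ι) : ℝ :=
  if |v i| = ⨆ k, |v k| then v i else 0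

theorem peakTruncation_neg (v : ι → ℝ) : peakTruncation (-v) = -peakTruncation v := by
  ext i
  simp only [peakTruncation, Pi.neg_apply, abs_neg]
  split_ifs <;> simp

theorem abs_peakTruncation_le (v : ι → ℝ) (i : ι) : |peakTruncation v i| ≤ |v i| := by
  unfold peakTruncation
  split_ifs <;> simp

theorem peakTruncation_eq_of_ne_zero {v : ι → ℝ} {i : ι} (h : peakTruncation v i ≠ 0) :
    peakTruncation v i = v i ∧ |v i| = ⨆ k, |v k| := by
  unfold peakTruncation at *
  split_ifs at * with hi
  exacts [⟨rfl, hi⟩, absurd rfl h]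

theorem ne_zero_of_mul_eq_abs {s x : ℝ} (hx : x ≠ 0) (h : s * x = |x|) : s ≠ 0 := by
  rintro rfl
  simp [eq_comm, hx] at h

theorem isL1Subgradient_peakTruncation_iff {v x : ι → ℝ} (hv : Memℓp v ∞) (hx : x ≠ 0) :
    IsL1Subgradient (peakTruncation v) x ↔ IsL1Subgradient v x := by
  have hbdd : BddAbove (Set.range fun i => |v i|) := by simpa using memℓp_infty_iff.1 hv
  constructor
  · intro h
    obtain ⟨i₀, hi₀⟩ := Function.ne_iff.1 hx
    obtain ⟨hv₀, hpeak⟩ := peakTruncation_eq_of_ne_zero (ne_zero_of_mul_eq_abs hi₀ (h i₀).2)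
    have hsup : (⨆ k, |v k|) ≤ 1 := by rw [← hpeak, ← hv₀]; exact (h i₀).1
    intro i
    refine ⟨(le_ciSup hbdd i).trans hsup, ?_⟩
    by_cases hxi : x i = 0
    · simp [hxi]
    · rw [← (peakTruncation_eq_of_ne_zero (ne_zero_of_mul_eq_abs hxi (h i).2)).1]
      exact (h i).2
  · intro h i
    refine ⟨(abs_peakTruncation_le v i).trans (h i).1, ?_⟩
    by_cases hxi : x i = 0
    · simp [hxi]
    have hvi : |v i| = 1 := by
      have := congrArg abs (h i).2
      rw [abs_mul, abs_abs] at this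
      exact (mul_eq_right₀ (abs_ne_zero.2 hxi)).1 this
    have hpeak : |v i| = ⨆ k, |v k| :=
      le_antisymm (le_ciSup hbdd i) (hvi ▸ Real.iSup_le (fun k => (h k).1) zero_le_one)
    rw [peakTruncation, if_pos hpeak]
    exact (h i).2

theorem forall_eq_softThreshold_sub_peakTruncation_iff {v x : ι → ℝ} (hv : Memℓp v ∞)
    (hx : x ≠ 0) :
    (∀ i, x i = softThreshold (x i - peakTruncation v i)) ↔ IsL1Subgradient (-v) x := by
  simp_rw [sub_eq_add_neg, ← Pi.neg_apply (peakTruncation v), ← peakTruncation_neg,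
    eq_softThreshold_add_iff]
  exact isL1Subgradient_peakTruncation_iff hv.neg hx

theorem exists_isL1Subgradient_iff_exists_fixedPoint {κ : Type*} [Fintype κ]
    {u : κ → ι → ℝ} (hu : ∀ j, Memℓp (u j) ∞) (x : ι → ℝ) :
    (∃ c : κ → ℝ, IsL1Subgradient (∑ j, c j • u j) x) ↔
      ∃ c : κ → ℝ, ∀ i, x i = softThreshold (x i - peakTruncation (∑ j, c j • u j) i) := by
  rcases eq_or_ne x 0 with rfl | hx
  · exact ⟨fun _ => ⟨0, by simp [softThreshold, peakTruncation]⟩,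
      fun _ => ⟨0, by simp [IsL1Subgradient]⟩⟩
  have hmem (c : κ → ℝ) : Memℓp (∑ j, c j • u j) ∞ := by
    rw [Finset.sum_fn]
    exact Memℓp.finsetSum _ fun j _ => (hu j).const_smul (c j)
  have hneg (c : κ → ℝ) : -∑ j, c j • u j = ∑ j, (-c) j • u j := by
    simp [Finset.sum_neg_distrib, neg_smul]
  simp_rw [forall_eq_softThreshold_sub_peakTruncation_iff (hmem _) hx, hneg]
  exact ⟨fun ⟨c, hc⟩ => ⟨-c, by rwa [neg_neg]⟩, fun ⟨c, hc⟩ => ⟨-c, hc⟩⟩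

end Truncation

theorem minimum_norm_interpolation_l1_fixed_point_general
    {m : ℕ} (u : Fin m → ℕ → ℝ)
    (hu0 : ∀ j, Tendsto (u j) atTop (𝓝 0))
    (y : Fin m → ℝ) (xhat : ℕ → ℝ) (hxhat : Summable fun i => |xhat i|) :
    ((∀ j, ∑' i, u j i * xhat i = y j) ∧
        ∀ x : ℕ → ℝ, Summable (fun i => |x i|) →
          (∀ j, ∑' i, u j i * x i = y j) → ∑' i, |xhat i| ≤ ∑' i, |x i|) ↔
      (∃ c : Fin m → ℝ,
        (∀ j, ∑' i, u j i * xhat i = y j) ∧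
        ∀ i : ℕ,
          xhat i =
            Real.sign (xhat i -
                (if |(∑ j, c j • u j) i| = ⨆ k, |(∑ j, c j • u j) k|
                  then (∑ j, c j • u j) i else 0)) *
              max (|xhat i -
                (if |(∑ j, c j • u j) i| = ⨆ k, |(∑ j, c j • u j) k|
                  then (∑ j, c j • u j) i else 0)| - 1) 0) := by
  have hu : ∀ j, Memℓp (u j) ∞ := fun j =>
    memℓp_infty_iff.2 (by simpa using (hu0 j).norm.bddAbove_range)
  let U : Fin m → ℓ^∞(ℕ, ℝ) := fun j => ⟨u j, hu j⟩
  let X : ℓ¹(ℕ, ℝ) := ⟨xhat, memℓp_one_iff_summable_abs.2 hxhat⟩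
  have hmin (hint : ∀ j, ∑' i, u j i * xhat i = y j) :
      (∀ x : ℕ → ℝ, Summable (fun i => |x i|) →
          (∀ j, ∑' i, u j i * x i = y j) → ∑' i, |xhat i| ≤ ∑' i, |x i|) ↔
        IsMinOn (‖·‖) {x | ∀ j, l1Pairing (U j) x = l1Pairing (U j) X} X := by
    simp only [isMinOn_iff, Set.mem_ofPred_eq, l1Pairing_apply, lp.norm_one_eq_tsum_abs]
    rw [forall_lp_one_iff (P := fun x => (∀ j, ∑' i, u j i * x i = ∑' i, u j i * xhat i) →
      ∑' i, |xhat i| ≤ ∑' i, |x i|)]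
    simp only [hint]
  have hcert (c : Fin m → ℝ) :
      ((∀ z, (∑ j, c j • l1Pairing (U j)) z ≤ ‖z‖) ∧ (∑ j, c j • l1Pairing (U j)) X = ‖X‖) ↔
        IsL1Subgradient (∑ j, c j • u j) xhat := by
    have hsum : ∑ j, c j • l1Pairing (U j) = l1Pairing (∑ j, c j • U j) := by
      simp only [map_sum, map_smul]
    have hcoe : ⇑(∑ j, c j • U j) = ∑ j, c j • u j := by
      rw [lp.coeFn_sum]
      rfl
    rw [hsum, ← isL1Subgradient_iff_l1Pairing, hcoe]
  rw [and_congr_right hmin, isMinOn_norm_iff_exists_mem_span]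
  simp_rw [Submodule.mem_span_range_iff_exists_fun, exists_exists_eq_and, hcert,
    exists_isL1Subgradient_iff_exists_fixedPoint hu, exists_and_left]
  rfl

/-- Fixed-point characterization of minimum norm interpolation in
`ℓ₁(ℕ)`: `x̂` is a solution iff for some `c ∈ ℝ^m` one has `L(x̂) = y` (equivalently the
fixed-point equation `c = prox_{ι_y*}(c + L(x̂))`, since `prox_{ι_y*}(a) = a − y`) and
`x̂ = P(x̂ − S(Σ c_j u_j))`, where `P` is componentwise soft-thresholding and `S` is the
truncation to the indices where the sup-norm is attained. -/
theorem minimum_norm_interpolation_l1_fixed_point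
    {m : ℕ} (u : Fin m → ℕ → ℝ)
    (hu0 : ∀ j, Tendsto (u j) atTop (𝓝 0)) (hu : LinearIndependent ℝ u)
    (y : Fin m → ℝ) (xhat : ℕ → ℝ) (hxhat : Summable fun i => |xhat i|) :
    ((∀ j, ∑' i, u j i * xhat i = y j) ∧
        ∀ x : ℕ → ℝ, Summable (fun i => |x i|) →
          (∀ j, ∑' i, u j i * x i = y j) → ∑' i, |xhat i| ≤ ∑' i, |x i|) ↔
      (∃ c : Fin m → ℝ,
        (∀ j, ∑' i, u j i * xhat i = y j) ∧
        ∀ i : ℕ,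
          xhat i =
            Real.sign (xhat i -
                (if |(∑ j, c j • u j) i| = ⨆ k, |(∑ j, c j • u j) k|
                  then (∑ j, c j • u j) i else 0)) *
              max (|xhat i -
                (if |(∑ j, c j • u j) i| = ⨆ k, |(∑ j, c j • u j) k|
                  then (∑ j, c j • u j) i else 0)| - 1) 0) :=
  minimum_norm_interpolation_l1_fixed_point_general u hu0 y xhat hxhat
end
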